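/- arXiv:2011.14626 — 7 statements merged into one kernel-verified Lean document; each statement's English description precedes it below -/
import Mathlib

section
/- Let A be an n×n real positive semidefinite matrix written in block form [[A', b],[bᵀ, γ]] where A' is (n-1)×(n-1), b is a column vector, and γ is a scalar. If det A' = 0, then det A = 0. -/
open Matrix

/-- If an `(n+1)×(n+1)` real positive semidefinite matrix is written in block form
`[[A', b], [bᵀ, γ]]` with leading principal block `A'` and `det A' = 0`,
then its determinant is zero. -/
theorem det_eq_zero_of_det_block_eq_zero
    (n : ℕ) (A' : Matrix (Fin n) (Fin n) ℝ) (b : Fin n → ℝ) (γ : ℝ)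
    (hM : (Matrix.fromBlocks A' (Matrix.of fun i (_ : Fin 1) => b i)
        (Matrix.of fun (_ : Fin 1) j => b j) (Matrix.of fun (_ : Fin 1) (_ : Fin 1) => γ)).PosSemidef)
    (hA' : A'.det = 0) :
    (Matrix.fromBlocks A' (Matrix.of fun i (_ : Fin 1) => b i)
        (Matrix.of fun (_ : Fin 1) j => b j) (Matrix.of fun (_ : Fin 1) (_ : Fin 1) => γ)).det = 0 := by
  set M := Matrix.fromBlocks A' (Matrix.of fun i (_ : Fin 1) => b i)
        (Matrix.of fun (_ : Fin 1) j => b j) (Matrix.of fun (_ : Fin 1) (_ : Fin 1) => γ) with hMdef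
  obtain ⟨x, hx, hAx⟩ := (Matrix.exists_mulVec_eq_zero_iff).mpr hA'
  set v : Fin n ⊕ Fin 1 → ℝ := Sum.elim x 0 with hv
  have hvne : v ≠ 0 := by
    intro h
    apply hx
    funext i
    exact congrFun h (Sum.inl i)
  have hMv : M *ᵥ v = 0 := by
    rw [← hM.dotProduct_mulVec_zero_iff]
    have : M *ᵥ v = Sum.elim (A' *ᵥ x) ((Matrix.of fun (_ : Fin 1) j => b j) *ᵥ x) := by
      rw [hMdef, hv, Matrix.fromBlocks_mulVec]
      simp [hAx]
    rw [this, hAx]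
    simp [hv, dotProduct]
  rw [← Matrix.exists_mulVec_eq_zero_iff]
  exact ⟨v, hvne, hMv⟩
end

section
/- For natural numbers n > k and nonnegative reals λ₁, …, λₙ (in decreasing order), the elementary symmetric polynomials satisfy e_{k+1}(λ₁,…,λₙ) ≤ e_k(λ₁,…,λₙ) · (λ_{k+1} + λ_{k+2} + ⋯ + λₙ). -/
/-- The `k`-th elementary symmetric polynomial of `x : ι → ℝ`. -/
def esymm {ι : Type*} [Fintype ι] [DecidableEq ι] (k : ℕ) (x : ι → ℝ) : ℝ :=
  ∑ s ∈ Finset.powersetCard k Finset.univ, ∏ i ∈ s, x i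

/-- Simple bound: `e_{k+1}(λ) ≤ e_k(λ) · (λ_{k+1} + ⋯ + λ_n)` for nonnegative,
decreasingly ordered `λ`. -/
theorem esymm_succ_le_esymm_mul_tail_sum
    (n k : ℕ) (hkn : k < n) (l : Fin n → ℝ)
    (hpos : ∀ i, 0 ≤ l i) (hmono : Antitone l) :
    esymm (k + 1) l ≤ esymm k l * ∑ i ∈ Finset.univ.filter (fun i : Fin n => k ≤ (i : ℕ)), l i := by
  classical
  set S := Finset.powersetCard (k + 1) (Finset.univ : Finset (Fin n)) with hS
  set T := (Finset.powersetCard k (Finset.univ : Finset (Fin n))) ×ˢ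
    (Finset.univ.filter fun i : Fin n => k ≤ (i : ℕ)) with hT
  have hne : ∀ s ∈ S, s.Nonempty := by
    intro s hs
    rw [hS, Finset.mem_powersetCard] at hs
    exact Finset.card_pos.mp (by omega)
  -- the map sending a (k+1)-set to (set minus its max, its max)
  set e : Finset (Fin n) → Finset (Fin n) × Fin n :=
    fun s => if h : s.Nonempty then (s.erase (s.max' h), s.max' h) else (s, ⟨0, by omega⟩)
    with he
  have hmem : ∀ s ∈ S, e s ∈ T := by
    intro s hs
    have h := hne s hs
    rw [hS, Finset.mem_powersetCard] at hs
    rw [he]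
    simp only [dif_pos h, hT, Finset.mem_product, Finset.mem_powersetCard,
      Finset.mem_filter, Finset.mem_univ, true_and]
    refine ⟨⟨Finset.subset_univ _, ?_⟩, ?_⟩
    · rw [Finset.card_erase_of_mem (s.max'_mem h), hs.2]; omega
    · -- max' has index ≥ k since s has k+1 elements
      have hsub : s ⊆ Finset.Iic (s.max' h) := fun x hx => Finset.mem_Iic.mpr (s.le_max' x hx)
      have := Finset.card_le_card hsub
      rw [Fin.card_Iic, hs.2] at this
      omega
  have hinj : Set.InjOn e S := by
    intro s hsS t htS hst
    have hs := hne s hsS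
    have ht := hne t htS
    rw [he] at hst
    simp only [dif_pos hs, dif_pos ht, Prod.mk.injEq] at hst
    have := Finset.insert_erase (s.max'_mem hs)
    rw [← this, hst.1, hst.2, Finset.insert_erase (t.max'_mem ht)]
  have key : esymm (k + 1) l = ∑ p ∈ S.image e, (∏ j ∈ p.1, l j) * l p.2 := by
    rw [Finset.sum_image fun s hs t ht hst => hinj hs ht hst]
    refine Finset.sum_congr rfl fun s hs => ?_
    have h := hne s hs
    rw [he]
    simp only [dif_pos h]
    rw [Finset.prod_erase_mul _ _ (s.max'_mem h)]
  rw [key, esymm, Finset.sum_mul_sum, ← Finset.sum_product']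
  refine Finset.sum_le_sum_of_subset_of_nonneg ?_ ?_
  · intro p hp
    rw [Finset.mem_image] at hp
    obtain ⟨s, hs, rfl⟩ := hp
    exact hmem s hs
  · intro p _ _
    exact mul_nonneg (Finset.prod_nonneg fun j _ => hpos j) (hpos p.2)
end

section
/- For q ∈ (0,1) and all k ≤ n, e_k(1, q, …, q^{n-1}) = ∏_{i=1}^{k} (q^{i-1} - qⁿ)/(1 - q^i). -/
lemma esymm_aux (q : ℝ) (hq0 : 0 < q) (hq1 : q < 1) :
    ∀ n k : ℕ, ∑ s ∈ (Finset.range n).powersetCard k, ∏ i ∈ s, q ^ i =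
      ∏ j ∈ Finset.range k, (q ^ j - q ^ n) / (1 - q ^ (j + 1)) := by
  have hden : ∀ j : ℕ, 1 - q ^ (j + 1) ≠ 0 := by
    intro j
    have : q ^ (j + 1) < 1 := pow_lt_one₀ hq0.le hq1 (Nat.succ_ne_zero j)
    linarith
  intro n
  induction n with
  | zero =>
    intro k
    cases k with
    | zero => simp
    | succ m =>
      rw [Finset.prod_eq_zero (Finset.mem_range.mpr (Nat.succ_pos m)) (by simp)]
      rw [Finset.range_zero]
      rw [show Finset.powersetCard (m+1) (∅ : Finset ℕ) = ∅ by
        simp [Finset.powersetCard_eq_empty]]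
      simp
  | succ n ih =>
    intro k
    cases k with
    | zero => simp
    | succ m =>
      rw [Finset.range_add_one,
        Finset.powersetCard_succ_insert Finset.notMem_range_self]
      have hdisj : Disjoint ((Finset.range n).powersetCard (m + 1))
          (((Finset.range n).powersetCard m).image (insert n)) := by
        rw [Finset.disjoint_left]
        intro s hs hs'
        obtain ⟨t, ht, rfl⟩ := Finset.mem_image.mp hs'
        have hsub := (Finset.mem_powersetCard.mp hs).1
        exact Finset.notMem_range_self (hsub (Finset.mem_insert_self n t))
      rw [Finset.sum_union hdisj]
      have hsum2 : ∑ s ∈ ((Finset.range n).powersetCard m).image (insert n),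
          ∏ i ∈ s, q ^ i = q ^ n * ∑ s ∈ (Finset.range n).powersetCard m, ∏ i ∈ s, q ^ i := by
        rw [Finset.sum_image, Finset.mul_sum]
        · refine Finset.sum_congr rfl fun s hs => ?_
          have hns : n ∉ s := fun h =>
            Finset.notMem_range_self ((Finset.mem_powersetCard.mp hs).1 h)
          rw [Finset.prod_insert hns]
        · intro s hs t ht hst
          have hns : n ∉ s := fun h =>
            Finset.notMem_range_self ((Finset.mem_powersetCard.mp hs).1 h)
          have hnt : n ∉ t := fun h =>
            Finset.notMem_range_self ((Finset.mem_powersetCard.mp ht).1 h)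
          have := congrArg (Finset.erase · n) hst
          simpa [Finset.erase_insert hns, Finset.erase_insert hnt] using this
      rw [hsum2, ih, ih]
      rw [Finset.prod_div_distrib, Finset.prod_div_distrib, Finset.prod_div_distrib,
        Finset.prod_range_succ, Finset.prod_range_succ]
      have hnum : ∏ j ∈ Finset.range (m + 1), (q ^ j - q ^ (n + 1)) =
          q ^ m * (1 - q ^ (n + 1)) * ∏ j ∈ Finset.range m, (q ^ j - q ^ n) := by
        rw [Finset.prod_range_succ']
        have h1 : ∀ j ∈ Finset.range m, q ^ (j + 1) - q ^ (n + 1) = q * (q ^ j - q ^ n) := by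
          intro j _; ring
        rw [Finset.prod_congr rfl h1, Finset.prod_mul_distrib, Finset.prod_const,
          Finset.card_range]
        ring
      rw [hnum]
      have hd1 : (∏ j ∈ Finset.range m, (1 - q ^ (j + 1))) ≠ 0 :=
        Finset.prod_ne_zero_iff.mpr fun j _ => hden j
      rw [div_add' _ _ _ (mul_ne_zero hd1 (hden m))]
      congr 1
      field_simp
      ring

/-- Alternative closed form: `e_k(1,q,…,q^{n-1}) = ∏_{i=1}^k (q^{i-1} - q^n)/(1-q^i)`. -/
theorem esymm_geometric_closed_form'
    (n k : ℕ) (hkn : k ≤ n) (q : ℝ) (hq0 : 0 < q) (hq1 : q < 1) :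
    esymm k (fun i : Fin n => q ^ (i : ℕ)) =
      ∏ i ∈ Finset.Icc 1 k, (q ^ (i - 1) - q ^ n) / (1 - q ^ i) := by
  have hL : esymm k (fun i : Fin n => q ^ (i : ℕ)) =
      ∑ s ∈ (Finset.range n).powersetCard k, ∏ i ∈ s, q ^ i := by
    rw [esymm, ← Nat.Iio_eq_range, ← Fin.map_valEmbedding_univ,
      Finset.powersetCard_map, Finset.sum_map]
    refine Finset.sum_congr rfl fun s _ => ?_
    rw [show ((Finset.mapEmbedding Fin.valEmbedding).toEmbedding s : Finset ℕ) =
      s.map Fin.valEmbedding from rfl, Finset.prod_map]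
    simp
  have hR : (∏ i ∈ Finset.Icc 1 k, (q ^ (i - 1) - q ^ n) / (1 - q ^ i)) =
      ∏ j ∈ Finset.range k, (q ^ j - q ^ n) / (1 - q ^ (j + 1)) := by
    rw [← Finset.Ico_add_one_right_eq_Icc, Finset.prod_Ico_eq_prod_range]
    simp [Nat.add_sub_cancel, add_comm]
  rw [hL, hR, esymm_aux q hq0 hq1]
end

section
/- For q ∈ (0,1) and k < n, the ratio of consecutive elementary symmetric polynomials of the geometric sequence equals e_{k+1}(1,q,…,q^{n-1}) / e_k(1,q,…,q^{n-1}) = (q^k - qⁿ)/(1 - q^{k+1}). -/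
open Finset

/-- elementary symmetric polynomial of geometric sequence, over `range n`. -/
noncomputable def Egeo (q : ℝ) (n k : ℕ) : ℝ :=
  ∑ s ∈ Finset.powersetCard k (Finset.range n), ∏ i ∈ s, q ^ i

lemma esymm_eq_Egeo (q : ℝ) (n k : ℕ) :
    esymm k (fun i : Fin n => q ^ (i : ℕ)) = Egeo q n k := by
  have h : Finset.range n = (Finset.univ : Finset (Fin n)).map Fin.valEmbedding := by
    rw [Fin.map_valEmbedding_univ]; ext x; simp
  rw [Egeo, h, Finset.powersetCard_map, Finset.sum_map]
  refine Finset.sum_congr rfl fun s _ => ?_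
  exact (Finset.prod_map s Fin.valEmbedding (fun i => q ^ i)).symm

lemma Egeo_zero (q : ℝ) (n : ℕ) : Egeo q n 0 = 1 := by
  simp [Egeo]

lemma Egeo_nil (q : ℝ) (k : ℕ) : Egeo q 0 (k + 1) = 0 := by
  rw [Egeo, Finset.powersetCard_eq_empty.2 (by simpa using Nat.succ_pos k), Finset.sum_empty]

lemma Egeo_succ (q : ℝ) (n k : ℕ) :
    Egeo q (n + 1) (k + 1) = Egeo q n (k + 1) + q ^ n * Egeo q n k := by
  have hn : (n : ℕ) ∉ Finset.range n := by simp
  rw [Egeo, Finset.range_add_one, Finset.powersetCard_succ_insert hn, Finset.sum_union, Egeo, Egeo,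
    Finset.sum_image, Finset.mul_sum]
  · congr 1
    refine Finset.sum_congr rfl fun s hs => ?_
    have hns : n ∉ s := fun h => hn ((Finset.mem_powersetCard.1 hs).1 h)
    rw [Finset.prod_insert hns]
  · intro s hs t ht hst
    have hns : n ∉ s := fun h => hn ((Finset.mem_powersetCard.1 hs).1 h)
    have hnt : n ∉ t := fun h => hn ((Finset.mem_powersetCard.1 ht).1 h)
    ext x
    constructor <;> intro hx
    · have : x ∈ insert n t := hst ▸ Finset.mem_insert_of_mem hx
      rcases Finset.mem_insert.1 this with h | h
      · exact absurd (h ▸ hx) hns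
      · exact h
    · have : x ∈ insert n s := hst ▸ Finset.mem_insert_of_mem hx
      rcases Finset.mem_insert.1 this with h | h
      · exact absurd (h ▸ hx) hnt
      · exact h
  · rw [Finset.disjoint_left]
    intro s hs hs'
    obtain ⟨t, ht, rfl⟩ := Finset.mem_image.1 hs'
    exact (fun h => hn ((Finset.mem_powersetCard.1 hs).1 h)) (Finset.mem_insert_self n t)

lemma Egeo_rec (q : ℝ) : ∀ n k : ℕ,
    Egeo q n (k + 1) * (1 - q ^ (k + 1)) = (q ^ k - q ^ n) * Egeo q n k := by
  intro n
  induction n with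
  | zero =>
    intro k
    cases k with
    | zero => simp [Egeo_nil, Egeo_zero]
    | succ m => simp [Egeo_nil]
  | succ n ih =>
    intro k
    cases k with
    | zero =>
      rw [Egeo_succ]
      simp only [Egeo_zero]
      have h0 := ih 0
      rw [Egeo_zero] at h0
      linear_combination h0
    | succ m =>
      have h1 := ih (m + 1)
      have h2 := ih m
      rw [Egeo_succ, Egeo_succ q n m]
      linear_combination h1 + q ^ (n + 1) * h2

lemma Egeo_pos (q : ℝ) (hq : 0 < q) : ∀ n k : ℕ, k ≤ n → 0 < Egeo q n k := by
  intro n k hkn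
  rw [Egeo]
  apply Finset.sum_pos
  · intro s _
    exact Finset.prod_pos fun i _ => pow_pos hq i
  · exact Finset.powersetCard_nonempty.2 (by simpa using hkn)

/-- Ratio of consecutive elementary symmetric polynomials of the geometric sequence:
`e_{k+1}/e_k = (q^k - q^n)/(1 - q^{k+1})`. -/
theorem esymm_geometric_ratio
    (n k : ℕ) (hkn : k < n) (q : ℝ) (hq0 : 0 < q) (hq1 : q < 1) :
    esymm (k + 1) (fun i : Fin n => q ^ (i : ℕ)) / esymm k (fun i : Fin n => q ^ (i : ℕ)) =
      (q ^ k - q ^ n) / (1 - q ^ (k + 1)) := by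
  rw [esymm_eq_Egeo, esymm_eq_Egeo]
  have hE : 0 < Egeo q n k := Egeo_pos q hq0 n k hkn.le
  have hq : 0 < 1 - q ^ (k + 1) := by
    have : q ^ (k + 1) < 1 := pow_lt_one₀ hq0.le hq1 (Nat.succ_ne_zero k)
    linarith
  have hrec := Egeo_rec q n k
  field_simp
  linarith [hrec]
end

section
/- If 0 < λᵢ ≤ μᵢ for all i = 1,…,n, then e_{k+1}(λ)/e_k(λ) ≤ e_{k+1}(μ)/e_k(μ) for all k < n. -/
open Finset

section Aux
variable {ι : Type*} [DecidableEq ι]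


/-- Elementary symmetric function over a finset. -/
def E (s : Finset ι) (k : ℕ) (x : ι → ℝ) : ℝ :=
  ∑ t ∈ s.powersetCard k, ∏ i ∈ t, x i

lemma E_zero (s : Finset ι) (x : ι → ℝ) : E s 0 x = 1 := by
  simp [E]

lemma E_of_card_lt {s : Finset ι} {k : ℕ} (h : s.card < k) (x : ι → ℝ) : E s k x = 0 := by
  simp [E, powersetCard_eq_empty.2 h]

lemma E_congr {s : Finset ι} {k : ℕ} {x y : ι → ℝ} (h : ∀ i ∈ s, x i = y i) :
    E s k x = E s k y := by
  unfold E
  refine Finset.sum_congr rfl fun t ht => Finset.prod_congr rfl fun i hi => ?_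
  exact h i ((mem_powersetCard.1 ht).1 hi)

lemma E_insert {a : ι} {s : Finset ι} (ha : a ∉ s) (k : ℕ) (x : ι → ℝ) :
    E (insert a s) (k + 1) x = E s (k + 1) x + x a * E s k x := by
  unfold E
  rw [powersetCard_succ_insert ha, Finset.sum_union, Finset.sum_image, Finset.mul_sum]
  · congr 1
    refine Finset.sum_congr rfl fun t ht => ?_
    have hat : a ∉ t := fun h => ha ((mem_powersetCard.1 ht).1 h)
    rw [Finset.prod_insert hat]
  · intro t ht u hu h
    have hat : a ∉ t := fun h => ha ((mem_powersetCard.1 ht).1 h)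
    have hau : a ∉ u := fun h => ha ((mem_powersetCard.1 hu).1 h)
    rwa [Finset.insert_erase_invOn.2.injOn.eq_iff] at h <;> simp [hat, hau]
  · rw [Finset.disjoint_right]
    intro t ht ht'
    obtain ⟨u, hu, rfl⟩ := Finset.mem_image.1 ht
    have : a ∉ u := fun h => ha ((mem_powersetCard.1 hu).1 h)
    exact ha ((mem_powersetCard.1 ht').1 (Finset.mem_insert_self a u))

lemma E_nonneg {s : Finset ι} {x : ι → ℝ} (hx : ∀ i ∈ s, 0 ≤ x i) (k : ℕ) :
    0 ≤ E s k x := by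
  refine Finset.sum_nonneg fun t ht => Finset.prod_nonneg fun i hi => ?_
  exact hx i ((mem_powersetCard.1 ht).1 hi)

lemma E_pos {s : Finset ι} {x : ι → ℝ} (hx : ∀ i ∈ s, 0 < x i) {k : ℕ} (hk : k ≤ s.card) :
    0 < E s k x := by
  refine Finset.sum_pos (fun t ht => Finset.prod_pos fun i hi => hx i ((mem_powersetCard.1 ht).1 hi)) ?_
  exact powersetCard_nonempty.2 hk

lemma E_succ_eq_zero {s : Finset ι} {x : ι → ℝ} (hx : ∀ i ∈ s, 0 < x i) {k : ℕ}
    (h : E s k x = 0) : E s (k + 1) x = 0 := by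
  rcases le_or_gt k s.card with hk | hk
  · exact absurd h (E_pos hx hk).ne'
  · exact E_of_card_lt (by omega) x

/-- Newton's inequality `e_k e_{k+2} ≤ e_{k+1}²` for positive variables. -/
lemma newton (s : Finset ι) (x : ι → ℝ) (hx : ∀ i ∈ s, 0 < x i) (k : ℕ) :
    E s k x * E s (k + 2) x ≤ E s (k + 1) x ^ 2 := by
  induction s using Finset.induction generalizing k with
  | empty =>
      rw [E_of_card_lt (show (∅ : Finset ι).card < k + 2 by simp) x, mul_zero]
      exact sq_nonneg _
  | @insert a s ha IH =>
      have hxa : 0 < x a := hx a (mem_insert_self a s)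
      have hxs : ∀ i ∈ s, 0 < x i := fun i hi => hx i (mem_insert_of_mem hi)
      have hnn : ∀ j, 0 ≤ E s j x := fun j => E_nonneg (fun i hi => (hxs i hi).le) j
      -- cross inequality on s
      have cross : ∀ j, E s j x * E s (j + 3) x ≤ E s (j + 1) x * E s (j + 2) x := by
        intro j
        by_cases h2 : E s (j + 2) x = 0
        · have h3 : E s (j + 3) x = 0 := E_succ_eq_zero hxs h2
          rw [h3, mul_zero]
          exact mul_nonneg (hnn _) (hnn _)
        · have h2' : 0 < E s (j + 2) x := lt_of_le_of_ne (hnn _) (Ne.symm h2)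
          have h1 : 0 < E s (j + 1) x := by
            rcases eq_or_lt_of_le (hnn (j+1)) with h | h
            · exact absurd (E_succ_eq_zero hxs h.symm) h2
            · exact h
          have n1 := IH hxs j
          have n2 := IH hxs (j + 1)
          have n2 : E s (j+1) x * E s (j+3) x ≤ E s (j+2) x ^ 2 := by
            convert n2 using 3 <;> omega
          have key : (E s j x * E s (j+3) x) * (E s (j+1) x * E s (j+2) x)
              ≤ (E s (j+1) x * E s (j+2) x) * (E s (j+1) x * E s (j+2) x) := by
            nlinarith [mul_le_mul n1 n2 (mul_nonneg (hnn (j+1)) (hnn (j+3))) (sq_nonneg (E s (j+1) x)), hnn j, hnn (j+1), hnn (j+2), hnn (j+3)]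
          exact le_of_mul_le_mul_right key (mul_pos h1 h2')
      cases k with
      | zero =>
          rw [E_insert ha 1 x, E_insert ha 0 x, E_zero]
          have h0 : E s 2 x ≤ E s 1 x ^ 2 := by simpa [E_zero] using IH hxs 0
          norm_num [E_zero]
          nlinarith [hnn 1, hnn 2]
      | succ k =>
          rw [E_insert ha (k+2) x, E_insert ha (k+1) x, E_insert ha k x]
          have n1 := IH hxs k
          have n2 := IH hxs (k + 1)
          have n2 : E s (k+1) x * E s (k+3) x ≤ E s (k+2) x ^ 2 := by
            convert n2 using 3 <;> omega
          have c := cross k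
          have e1 : E s (k+1+1) x = E s (k+2) x := rfl
          have e2 : E s (k+1+2) x = E s (k+3) x := rfl
          rw [e1, e2]
          nlinarith [hnn k, hnn (k+1), hnn (k+2), hnn (k+3), hxa,
            mul_nonneg hxa.le (sub_nonneg.2 c),
            mul_nonneg (mul_nonneg hxa.le hxa.le) (sub_nonneg.2 n1)]

end Aux

lemma esymm_eq_E {ι : Type*} [Fintype ι] [DecidableEq ι] (k : ℕ) (x : ι → ℝ) :
    esymm k x = E Finset.univ k x := rfl

/-- Single-coordinate monotonicity of the ratio. -/
lemma ratio_step {n k : ℕ} (hkn : k < n) (x : Fin n → ℝ) (hx : ∀ i, 0 < x i)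
    (a : Fin n) {t : ℝ} (ht : x a ≤ t) :
    esymm (k + 1) x / esymm k x ≤
      esymm (k + 1) (Function.update x a t) / esymm k (Function.update x a t) := by
  set y := Function.update x a t with hy
  have hyx : ∀ i ∈ (univ : Finset (Fin n)).erase a, x i = y i := by
    intro i hi
    rw [hy, Function.update_of_ne (Finset.ne_of_mem_erase hi)]
  have hya : y a = t := Function.update_self a t x
  have hypos : ∀ i, 0 < y i := by
    intro i
    by_cases h : i = a
    · rw [h, hya]; exact lt_of_lt_of_le (hx a) ht
    · rw [hy, Function.update_of_ne h]; exact hx i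
  set s : Finset (Fin n) := (univ : Finset (Fin n)).erase a with hs
  have has : a ∉ s := Finset.notMem_erase a _
  have huniv : insert a s = (univ : Finset (Fin n)) := Finset.insert_erase (Finset.mem_univ a)
  have hcard : s.card = n - 1 := by
    rw [hs, Finset.card_erase_of_mem (Finset.mem_univ a), Finset.card_univ, Fintype.card_fin]
  have hxs : ∀ i ∈ s, 0 < x i := fun i _ => hx i
  have hnn : ∀ j, 0 ≤ E s j x := fun j => E_nonneg (fun i hi => (hxs i hi).le) j
  have hEx : ∀ j, E s j y = E s j x := fun j => (E_congr (fun i hi => (hyx i hi).symm))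
  have expand : ∀ (z : Fin n → ℝ) (j : ℕ), esymm (j + 1) z = E s (j + 1) z + z a * E s j z := by
    intro z j
    rw [esymm_eq_E, ← huniv, E_insert has]
  cases k with
  | zero =>
      have h0 : ∀ z : Fin n → ℝ, esymm 0 z = 1 := fun z => by
        rw [esymm_eq_E, E_zero]
      rw [h0, h0, div_one, div_one, expand, expand, hEx, hEx, E_zero, hya]
      nlinarith [hx a]
  | succ k =>
      have hdenx : 0 < esymm (k + 1) x := by
        rw [esymm_eq_E]
        exact E_pos (fun i _ => hx i) (by simp [Finset.card_univ]; omega)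
      have hdeny : 0 < esymm (k + 1) y := by
        rw [esymm_eq_E]
        exact E_pos (fun i _ => hypos i) (by simp [Finset.card_univ]; omega)
      rw [div_le_div_iff₀ hdenx hdeny]
      rw [expand x (k+1), expand x k, expand y (k+1), expand y k, hEx, hEx, hEx, hya]
      have hnewton := newton s x hxs k
      have e1 : E s (k+1+1) x = E s (k+2) x := rfl
      rw [e1]
      nlinarith [hnn k, hnn (k+1), hnn (k+2), hx a, lt_of_lt_of_le (hx a) ht,
        mul_nonneg (sub_nonneg.2 ht) (sub_nonneg.2 hnewton)]


/-- Monotonicity: if `0 < λ ≤ μ` componentwise then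
`e_{k+1}(λ)/e_k(λ) ≤ e_{k+1}(μ)/e_k(μ)`. -/
theorem esymm_ratio_monotone
    (n k : ℕ) (hkn : k < n) (l m : Fin n → ℝ)
    (hl : ∀ i, 0 < l i) (hlm : ∀ i, l i ≤ m i) :
    esymm (k + 1) l / esymm k l ≤ esymm (k + 1) m / esymm k m := by
  have main : ∀ S : Finset (Fin n),
      esymm (k + 1) l / esymm k l ≤
        esymm (k + 1) (fun i => if i ∈ S then m i else l i) /
          esymm k (fun i => if i ∈ S then m i else l i) := by
    intro S
    induction S using Finset.induction with
    | empty => simp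
    | @insert a S ha IH =>
        refine le_trans IH ?_
        have hupd : (fun i => if i ∈ insert a S then m i else l i)
            = Function.update (fun i => if i ∈ S then m i else l i) a (m a) := by
          funext i
          by_cases h : i = a
          · subst h; simp [Function.update_self]
          · simp [Function.update_of_ne h, Finset.mem_insert, h]
        rw [hupd]
        refine ratio_step hkn _ (fun i => ?_) a ?_
        · by_cases h : i ∈ S
          · simpa [h] using lt_of_lt_of_le (hl i) (hlm i)
          · simpa [h] using hl i
        · simp [ha]
          exact hlm a
  have := main Finset.univ
  simpa using this
end

section
/- (Marcus–Lopes inequality) For nonnegative vectors λ, μ ∈ ℝⁿ with e_k(λ) > 0 and e_k(μ) > 0, one has e_{k+1}(λ+μ)/e_k(λ+μ) ≥ e_{k+1}(λ)/e_k(λ) + e_{k+1}(μ)/e_k(μ). -/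
open Finset

/-- Elementary symmetric sum of `x` over a finset `A` of indices. -/
def esymmOn {ι : Type*} (A : Finset ι) (k : ℕ) (x : ι → ℝ) : ℝ :=
  ∑ s ∈ A.powersetCard k, ∏ i ∈ s, x i

lemma esymmOn_nonneg {ι : Type*} (A : Finset ι) (k : ℕ) (x : ι → ℝ)
    (hx : ∀ i ∈ A, 0 ≤ x i) : 0 ≤ esymmOn A k x :=
  Finset.sum_nonneg fun _s hs => Finset.prod_nonneg fun i hi =>
    hx i ((Finset.mem_powersetCard.mp hs).1 hi)

lemma esymmOn_zero {ι : Type*} (A : Finset ι) (x : ι → ℝ) : esymmOn A 0 x = 1 := by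
  simp [esymmOn]

lemma esymmOn_one {ι : Type*} (A : Finset ι) (x : ι → ℝ) : esymmOn A 1 x = ∑ i ∈ A, x i := by
  simp [esymmOn, Finset.powersetCard_one]

lemma esymmOn_pos_iff {ι : Type*} [DecidableEq ι] (A : Finset ι) (k : ℕ) (x : ι → ℝ)
    (hx : ∀ i ∈ A, 0 ≤ x i) :
    0 < esymmOn A k x ↔ k ≤ (A.filter fun i => 0 < x i).card := by
  constructor
  · intro h
    by_contra hc
    push_neg at hc
    have : esymmOn A k x = 0 := by
      refine Finset.sum_eq_zero fun s hs => ?_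
      obtain ⟨hsA, hsc⟩ := Finset.mem_powersetCard.mp hs
      have : ¬ s ⊆ (A.filter fun i => 0 < x i) := by
        intro hsub
        have := Finset.card_le_card hsub
        omega
      obtain ⟨j, hjs, hjn⟩ := Finset.not_subset.mp this
      have hj0 : x j = 0 := by
        have h1 : ¬ 0 < x j := fun hp => hjn (Finset.mem_filter.mpr ⟨hsA hjs, hp⟩)
        linarith [hx j (hsA hjs)]
      exact Finset.prod_eq_zero hjs hj0
    linarith
  · intro h
    obtain ⟨s, hsub, hcard⟩ := Finset.exists_subset_card_eq h
    refine Finset.sum_pos' (fun t ht => Finset.prod_nonneg fun i hi =>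
      hx i ((Finset.mem_powersetCard.mp ht).1 hi)) ⟨s, ?_, ?_⟩
    · exact Finset.mem_powersetCard.mpr ⟨hsub.trans (Finset.filter_subset _ _), hcard⟩
    · exact Finset.prod_pos fun i hi => (Finset.mem_filter.mp (hsub hi)).2

lemma esymmOn_erase {ι : Type*} [DecidableEq ι] {A : Finset ι} {i : ι} (hi : i ∈ A)
    (r : ℕ) (x : ι → ℝ) :
    esymmOn A (r + 1) x = esymmOn (A.erase i) (r + 1) x + x i * esymmOn (A.erase i) r x := by
  conv_lhs => rw [← Finset.insert_erase hi]
  unfold esymmOn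
  rw [Finset.powersetCard_succ_insert (Finset.notMem_erase i A)]
  rw [Finset.sum_union, Finset.sum_image]
  · congr 1
    rw [Finset.mul_sum]
    refine Finset.sum_congr rfl fun s hs => ?_
    have his : i ∉ s := fun h =>
      Finset.notMem_erase i A ((Finset.mem_powersetCard.mp hs).1 h)
    rw [Finset.prod_insert his]
  · intro s hs t ht hst
    have his : i ∉ s := fun h =>
      Finset.notMem_erase i A ((Finset.mem_powersetCard.mp hs).1 h)
    have hit : i ∉ t := fun h =>
      Finset.notMem_erase i A ((Finset.mem_powersetCard.mp ht).1 h)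
    rw [← Finset.erase_insert his, ← Finset.erase_insert hit, hst]
  · rw [Finset.disjoint_left]
    intro t ht htim
    obtain ⟨u, hu, rfl⟩ := Finset.mem_image.mp htim
    have : i ∈ A.erase i := (Finset.mem_powersetCard.mp ht).1 (Finset.mem_insert_self i u)
    exact Finset.notMem_erase i A this

lemma esymmOn_sum_erase {ι : Type*} [DecidableEq ι] (A : Finset ι) (r : ℕ) (x : ι → ℝ) :
    ∑ i ∈ A, x i * esymmOn (A.erase i) r x = (r + 1 : ℝ) * esymmOn A (r + 1) x := by
  calc ∑ i ∈ A, x i * esymmOn (A.erase i) r x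
      = ∑ i ∈ A, ∑ s ∈ (A.erase i).powersetCard r, x i * ∏ j ∈ s, x j := by
        simp [esymmOn, Finset.mul_sum]
    _ = ∑ t ∈ A.powersetCard (r + 1), ∑ i ∈ t, x i * ∏ j ∈ t.erase i, x j := by
        rw [Finset.sum_sigma', Finset.sum_sigma']
        refine Finset.sum_nbij' (fun p => ⟨insert p.1 p.2, p.1⟩) (fun p => ⟨p.2, p.1.erase p.2⟩)
          ?_ ?_ ?_ ?_ ?_
        · rintro ⟨i, s⟩ hp
          obtain ⟨hiA, hs⟩ := Finset.mem_sigma.mp hp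
          obtain ⟨hsub, hcard⟩ := Finset.mem_powersetCard.mp hs
          have his : i ∉ s := fun h => Finset.notMem_erase i A (hsub h)
          refine Finset.mem_sigma.mpr ⟨Finset.mem_powersetCard.mpr ⟨?_, ?_⟩, ?_⟩
          · exact Finset.insert_subset hiA (hsub.trans (Finset.erase_subset i A))
          · rw [Finset.card_insert_of_notMem his, hcard]
          · exact Finset.mem_insert_self i s
        · rintro ⟨t, i⟩ hp
          obtain ⟨ht, hit⟩ := Finset.mem_sigma.mp hp
          obtain ⟨hsub, hcard⟩ := Finset.mem_powersetCard.mp ht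
          refine Finset.mem_sigma.mpr ⟨hsub hit, Finset.mem_powersetCard.mpr ⟨?_, ?_⟩⟩
          · exact Finset.erase_subset_erase i hsub
          · rw [Finset.card_erase_of_mem hit, hcard]; omega
        · rintro ⟨i, s⟩ hp
          obtain ⟨hiA, hs⟩ := Finset.mem_sigma.mp hp
          have his : i ∉ s := fun h =>
            Finset.notMem_erase i A ((Finset.mem_powersetCard.mp hs).1 h)
          simp [Finset.erase_insert his]
        · rintro ⟨t, i⟩ hp
          obtain ⟨ht, hit⟩ := Finset.mem_sigma.mp hp
          simp [Finset.insert_erase hit]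
        · rintro ⟨i, s⟩ hp
          obtain ⟨hiA, hs⟩ := Finset.mem_sigma.mp hp
          have his : i ∉ s := fun h =>
            Finset.notMem_erase i A ((Finset.mem_powersetCard.mp hs).1 h)
          simp [Finset.erase_insert his]
    _ = (r + 1 : ℝ) * esymmOn A (r + 1) x := by
        rw [esymmOn, Finset.mul_sum]
        refine Finset.sum_congr rfl fun t ht => ?_
        obtain ⟨hsub, hcard⟩ := Finset.mem_powersetCard.mp ht
        calc ∑ i ∈ t, x i * ∏ j ∈ t.erase i, x j
            = ∑ i ∈ t, ∏ j ∈ t, x j :=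
              Finset.sum_congr rfl fun i hi => Finset.mul_prod_erase t x hi
          _ = (r + 1 : ℝ) * ∏ j ∈ t, x j := by
              rw [Finset.sum_const, hcard]; push_cast; ring

lemma harm_mono {a b b' : ℝ} (ha : 0 ≤ a) (hb : 0 ≤ b) (hbb : b ≤ b') :
    a * b / (a + b) ≤ a * b' / (a + b') := by
  rcases eq_or_lt_of_le ha with h | h
  · simp [← h]
  · rcases eq_or_lt_of_le hb with h2 | h2
    · rw [← h2, mul_zero, zero_div]
      have hb' : 0 ≤ b' := le_trans hb hbb
      positivity
    · have h1 : 0 < a + b := by linarith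
      have h2 : 0 < a + b' := by linarith
      rw [div_le_div_iff₀ h1 h2]
      nlinarith [mul_le_mul_of_nonneg_left hbb (by positivity : (0:ℝ) ≤ a * a)]

lemma harm_superadd {a b c d : ℝ} (ha : 0 ≤ a) (hb : 0 ≤ b) (hc : 0 ≤ c) (hd : 0 ≤ d) :
    a * b / (a + b) + c * d / (c + d) ≤ (a + c) * (b + d) / (a + c + (b + d)) := by
  rcases eq_or_lt_of_le (by linarith : (0:ℝ) ≤ a + b) with h | h
  · have ha0 : a = 0 := by linarith
    have hb0 : b = 0 := by linarith
    simp only [ha0, hb0]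
    rw [zero_mul, zero_div, zero_add, zero_add, zero_add]
  · rcases eq_or_lt_of_le (by linarith : (0:ℝ) ≤ c + d) with h2 | h2
    · have hc0 : c = 0 := by linarith
      have hd0 : d = 0 := by linarith
      simp only [hc0, hd0]
      rw [zero_mul, zero_div, add_zero, add_zero, add_zero]
    · have hsum : 0 < a + c + (b + d) := by linarith
      rw [div_add_div _ _ (ne_of_gt h) (ne_of_gt h2), div_le_div_iff₀ (by positivity) hsum]
      nlinarith [sq_nonneg (a * d - c * b), mul_nonneg (mul_nonneg ha hb) (mul_nonneg hc hd)]

lemma harm_eq {a p q : ℝ} (ha : 0 ≤ a) (hp : 0 ≤ p) (hq : 0 < q) :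
    a * (p / q) / (a + p / q) = a * p / (p + a * q) := by
  rcases eq_or_lt_of_le ha with h | h
  · simp [← h]
  · rcases eq_or_lt_of_le hp with h2 | h2
    · rw [← h2]
      simp
    · have h1 : 0 < a + p / q := by positivity
      have h3 : 0 < p + a * q := by positivity
      field_simp
      ring

/-- The key quasilinearization formula:
`(k+2) e_{k+2}(x)/e_{k+1}(x) = ∑ᵢ h(xᵢ, gᵢ)` with `h(a,b) = ab/(a+b)` and
`gᵢ` the corresponding ratio with coordinate `i` deleted. -/
lemma ratio_sum {ι : Type*} [DecidableEq ι] (A : Finset ι) (k : ℕ) (x : ι → ℝ)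
    (hx : ∀ i ∈ A, 0 ≤ x i) (hpos : 0 < esymmOn A (k + 1) x) :
    (k + 2 : ℝ) * (esymmOn A (k + 2) x / esymmOn A (k + 1) x) =
      ∑ i ∈ A, (x i * (esymmOn (A.erase i) (k + 1) x / esymmOn (A.erase i) k x)) /
        (x i + esymmOn (A.erase i) (k + 1) x / esymmOn (A.erase i) k x) := by
  have hfil := (esymmOn_pos_iff A (k + 1) x hx).mp hpos
  rw [eq_comm]
  have step : ∀ i ∈ A,
      (x i * (esymmOn (A.erase i) (k + 1) x / esymmOn (A.erase i) k x)) /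
        (x i + esymmOn (A.erase i) (k + 1) x / esymmOn (A.erase i) k x) =
      x i * esymmOn (A.erase i) (k + 1) x / esymmOn A (k + 1) x := by
    intro i hi
    have hx' : ∀ j ∈ A.erase i, 0 ≤ x j := fun j hj => hx j (Finset.erase_subset i A hj)
    have hq : 0 < esymmOn (A.erase i) k x := by
      rw [esymmOn_pos_iff _ _ _ hx', Finset.filter_erase]
      have := Finset.pred_card_le_card_erase
        (s := A.filter fun j => 0 < x j) (a := i)
      omega
    have hp : 0 ≤ esymmOn (A.erase i) (k + 1) x := esymmOn_nonneg _ _ _ hx'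
    rw [harm_eq (hx i hi) hp hq, esymmOn_erase hi k x]
  rw [Finset.sum_congr rfl step, ← Finset.sum_div, esymmOn_sum_erase A (k + 1) x]
  push_cast
  ring

/-- Marcus–Lopes inequality over an arbitrary index finset. -/
lemma marcus_lopes_on {ι : Type*} [DecidableEq ι] (k : ℕ) (A : Finset ι) (l m : ι → ℝ)
    (hl : ∀ i ∈ A, 0 ≤ l i) (hm : ∀ i ∈ A, 0 ≤ m i)
    (hel : 0 < esymmOn A k l) (hem : 0 < esymmOn A k m) :
    esymmOn A (k + 1) l / esymmOn A k l + esymmOn A (k + 1) m / esymmOn A k m ≤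
      esymmOn A (k + 1) (l + m) / esymmOn A k (l + m) := by
  induction k generalizing A l m with
  | zero =>
    simp [esymmOn_zero, esymmOn_one, Finset.sum_add_distrib]
  | succ k IH =>
    have hν : ∀ i ∈ A, 0 ≤ (l + m) i := fun i hi => by
      simpa using add_nonneg (hl i hi) (hm i hi)
    have hfl := (esymmOn_pos_iff A (k + 1) l hl).mp hel
    have hfm := (esymmOn_pos_iff A (k + 1) m hm).mp hem
    have hsubν : (A.filter fun i => 0 < l i) ⊆ (A.filter fun i => 0 < (l + m) i) := by
      intro i hi
      obtain ⟨hiA, hil⟩ := Finset.mem_filter.mp hi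
      exact Finset.mem_filter.mpr ⟨hiA, by simpa using add_pos_of_pos_of_nonneg hil (hm i hiA)⟩
    have heν : 0 < esymmOn A (k + 1) (l + m) := by
      rw [esymmOn_pos_iff _ _ _ hν]
      exact le_trans hfl (Finset.card_le_card hsubν)
    have Hl := ratio_sum A k l hl hel
    have Hm := ratio_sum A k m hm hem
    have Hν := ratio_sum A k (l + m) hν heν
    have hsum :
        (∑ i ∈ A, (l i * (esymmOn (A.erase i) (k + 1) l / esymmOn (A.erase i) k l)) /
            (l i + esymmOn (A.erase i) (k + 1) l / esymmOn (A.erase i) k l)) +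
        (∑ i ∈ A, (m i * (esymmOn (A.erase i) (k + 1) m / esymmOn (A.erase i) k m)) /
            (m i + esymmOn (A.erase i) (k + 1) m / esymmOn (A.erase i) k m)) ≤
        ∑ i ∈ A, ((l + m) i *
            (esymmOn (A.erase i) (k + 1) (l + m) / esymmOn (A.erase i) k (l + m))) /
            ((l + m) i + esymmOn (A.erase i) (k + 1) (l + m) / esymmOn (A.erase i) k (l + m)) := by
      rw [← Finset.sum_add_distrib]
      refine Finset.sum_le_sum fun i hi => ?_
      have hl' : ∀ j ∈ A.erase i, 0 ≤ l j := fun j hj => hl j (Finset.erase_subset i A hj)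
      have hm' : ∀ j ∈ A.erase i, 0 ≤ m j := fun j hj => hm j (Finset.erase_subset i A hj)
      have hν' : ∀ j ∈ A.erase i, 0 ≤ (l + m) j := fun j hj => hν j (Finset.erase_subset i A hj)
      have hql : 0 < esymmOn (A.erase i) k l := by
        rw [esymmOn_pos_iff _ _ _ hl', Finset.filter_erase]
        have := Finset.pred_card_le_card_erase (s := A.filter fun j => 0 < l j) (a := i)
        omega
      have hqm : 0 < esymmOn (A.erase i) k m := by
        rw [esymmOn_pos_iff _ _ _ hm', Finset.filter_erase]
        have := Finset.pred_card_le_card_erase (s := A.filter fun j => 0 < m j) (a := i)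
        omega
      have hIH := IH (A.erase i) l m hl' hm' hql hqm
      set gl := esymmOn (A.erase i) (k + 1) l / esymmOn (A.erase i) k l with hgl
      set gm := esymmOn (A.erase i) (k + 1) m / esymmOn (A.erase i) k m with hgm
      set gν := esymmOn (A.erase i) (k + 1) (l + m) / esymmOn (A.erase i) k (l + m) with hgν
      have hgl0 : 0 ≤ gl := div_nonneg (esymmOn_nonneg _ _ _ hl') (le_of_lt hql)
      have hgm0 : 0 ≤ gm := div_nonneg (esymmOn_nonneg _ _ _ hm') (le_of_lt hqm)
      calc l i * gl / (l i + gl) + m i * gm / (m i + gm)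
          ≤ (l i + m i) * (gl + gm) / (l i + m i + (gl + gm)) :=
            harm_superadd (hl i hi) hgl0 (hm i hi) hgm0
        _ ≤ (l i + m i) * gν / (l i + m i + gν) :=
            harm_mono (add_nonneg (hl i hi) (hm i hi)) (add_nonneg hgl0 hgm0) hIH
        _ = (l + m) i * gν / ((l + m) i + gν) := by simp
    rw [← Hl, ← Hm, ← Hν] at hsum
    have hk2 : (0:ℝ) < (k : ℝ) + 2 := by positivity
    have h3 : ((k : ℝ) + 2) *
        (esymmOn A (k + 2) l / esymmOn A (k + 1) l +
          esymmOn A (k + 2) m / esymmOn A (k + 1) m) ≤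
        ((k : ℝ) + 2) * (esymmOn A (k + 2) (l + m) / esymmOn A (k + 1) (l + m)) := by
      rw [mul_add]; linarith
    exact le_of_mul_le_mul_left h3 hk2

lemma esymm_eq_esymmOn {ι : Type*} [Fintype ι] [DecidableEq ι] (k : ℕ) (x : ι → ℝ) :
    esymm k x = esymmOn Finset.univ k x := rfl

/-- Marcus–Lopes inequality:
`e_{k+1}(λ+μ)/e_k(λ+μ) ≥ e_{k+1}(λ)/e_k(λ) + e_{k+1}(μ)/e_k(μ)` for nonnegative vectors. -/
theorem marcus_lopes_inequality
    (n k : ℕ) (hkn : k + 1 ≤ n) (l m : Fin n → ℝ)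
    (hl : ∀ i, 0 ≤ l i) (hm : ∀ i, 0 ≤ m i)
    (hel : 0 < esymm k l) (hem : 0 < esymm k m) :
    esymm (k + 1) (l + m) / esymm k (l + m) ≥
      esymm (k + 1) l / esymm k l + esymm (k + 1) m / esymm k m := by
  rw [ge_iff_le]
  simp only [esymm_eq_esymmOn] at *
  exact marcus_lopes_on k Finset.univ l m (fun i _ => hl i) (fun i _ => hm i) hel hem
end

section
/- For a positive semidefinite matrix M with eigenvalues λ₁ ≥ ⋯ ≥ λₙ ≥ 0 and c_k(M) > 0, the expected volume-sampling CUR error (k+1)·c_{k+1}(M)/c_k(M) is bounded by (k+1) times the optimal rank-k nuclear norm error: (k+1)·c_{k+1}(M)/c_k(M) ≤ (k+1)·Σ_{i=k+1}^{n} λᵢ. -/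
open Matrix Polynomial

-- Lemma B: det of matrix whose rows on s are std basis vectors
lemma det_piecewise_single {R : Type*} [CommRing R] {n : ℕ} (s : Finset (Fin n))
    (M : Matrix (Fin n) (Fin n) R) :
    Matrix.det (Matrix.of (s.piecewise (fun i => Pi.single i (1:R)) M)) =
      (M.submatrix (Subtype.val : {x // x ∈ sᶜ} → Fin n) Subtype.val).det := by
  classical
  set N := Matrix.of (s.piecewise (fun i => Pi.single i (1:R)) M) with hN
  have he : Matrix.det N = Matrix.det (N.submatrix (Equiv.sumCompl (· ∈ s)) (Equiv.sumCompl (· ∈ s))) :=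
    (Matrix.det_submatrix_equiv_self _ _).symm
  rw [he]
  have hblock : N.submatrix (Equiv.sumCompl (· ∈ s)) (Equiv.sumCompl (· ∈ s)) =
      Matrix.fromBlocks 1 0
        (M.submatrix (Subtype.val : {x // ¬ x ∈ s} → Fin n) (Subtype.val : {x // x ∈ s} → Fin n))
        (M.submatrix (Subtype.val : {x // ¬ x ∈ s} → Fin n) Subtype.val) := by
    ext i j
    cases i with
    | inl a =>
      cases j with
      | inl b =>
        simp only [hN, Finset.piecewise, a.2, Pi.single_apply, Matrix.submatrix_apply,
          Equiv.sumCompl_apply_inl, Matrix.fromBlocks_apply₁₁, Matrix.of_apply, if_true]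
        rw [Matrix.one_apply]
        exact if_congr (by rw [Subtype.ext_iff, eq_comm]) rfl rfl
      | inr b =>
        have hba : (b : Fin n) ≠ (a : Fin n) := fun h => b.2 (h ▸ a.2)
        simp [hN, Finset.piecewise, a.2, Pi.single_apply, hba]
    | inr a =>
      cases j with
      | inl b => simp [hN, Finset.piecewise, a.2]
      | inr b => simp [hN, Finset.piecewise, a.2]
  rw [hblock, Matrix.det_fromBlocks_zero₁₂, Matrix.det_one, one_mul]
  rw [← Matrix.det_submatrix_equiv_self (Equiv.subtypeEquivRight (fun x => Finset.mem_compl) :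
      {x // x ∈ sᶜ} ≃ {x // ¬ x ∈ s}), Matrix.submatrix_submatrix]
  rfl

lemma det_diagonal_add {R : Type*} [CommRing R] {n : ℕ} (d : Fin n → R)
    (M : Matrix (Fin n) (Fin n) R) :
    (Matrix.diagonal d + M).det =
      ∑ s ∈ Finset.powerset (Finset.univ : Finset (Fin n)),
        (∏ i ∈ sᶜ, d i) *
          (M.submatrix (Subtype.val : {x // x ∈ s} → Fin n) Subtype.val).det := by
  classical
  have h1 : (Matrix.diagonal d + M).det =
      ∑ s : Finset (Fin n),
        (Matrix.detRowAlternating (s.piecewise (Matrix.diagonal d) M) : R) := by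
    exact (Matrix.detRowAlternating : AlternatingMap R (Fin n → R) R (Fin n)
      ).toMultilinearMap.map_add_univ (Matrix.diagonal d) M
  rw [h1]
  have h2 : ∀ s : Finset (Fin n),
      (Matrix.detRowAlternating (s.piecewise (Matrix.diagonal d) M) : R) =
        (∏ i ∈ s, d i) *
          (M.submatrix (Subtype.val : {x // x ∈ sᶜ} → Fin n) Subtype.val).det := by
    intro s
    set N : Matrix (Fin n) (Fin n) R := Matrix.of (s.piecewise (fun i => Pi.single i (1:R)) M)
      with hNdef
    have hpw : s.piecewise (Matrix.diagonal d) M = s.piecewise (fun i => d i • N i) N := by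
      funext i
      by_cases hi : i ∈ s
      · simp only [Finset.piecewise, hi, if_true]
        funext j
        simp [hNdef, Finset.piecewise, hi, Matrix.diagonal_apply,
          Pi.single_apply, eq_comm]
      · simp only [Finset.piecewise, hi, if_false]
        rw [hNdef]
        show M i = s.piecewise (fun i => Pi.single i (1:R)) M i
        simp only [Finset.piecewise, hi, if_false]
    rw [hpw]
    have h3 := (Matrix.detRowAlternating : AlternatingMap R (Fin n → R) R (Fin n)
      ).toMultilinearMap.map_piecewise_smul d N s
    exact h3.trans (by rw [smul_eq_mul]; congr 1; exact det_piecewise_single s M)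
  rw [← Finset.powerset_univ]
  rw [Finset.sum_congr rfl (fun s _ => h2 s)]
  refine Finset.sum_nbij' (fun s => sᶜ) (fun s => sᶜ) ?_ ?_ ?_ ?_ ?_
  · intro a _; exact Finset.mem_powerset.2 (Finset.subset_univ _)
  · intro a _; exact Finset.mem_powerset.2 (Finset.subset_univ _)
  · intro a _; exact compl_compl a
  · intro a _; exact compl_compl a
  · intro a _; rw [compl_compl]


/-- `cMinor k M` is the sum of all `k×k` principal minors of `M`. -/
noncomputable def cMinor {n : ℕ} (k : ℕ) (M : Matrix (Fin n) (Fin n) ℝ) : ℝ :=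
  ∑ s ∈ Finset.powersetCard k (Finset.univ : Finset (Fin n)),
    (M.submatrix (Subtype.val : {x // x ∈ s} → Fin n) Subtype.val).det

lemma charpoly_expand {n : ℕ} (M : Matrix (Fin n) (Fin n) ℝ) :
    (Matrix.diagonal (fun _ : Fin n => (X : ℝ[X])) + M.map C).det =
      ∑ s ∈ Finset.powerset (Finset.univ : Finset (Fin n)),
        C ((M.submatrix (Subtype.val : {x // x ∈ s} → Fin n) Subtype.val).det)
          * X ^ (n - s.card) := by
  rw [det_diagonal_add]
  refine Finset.sum_congr rfl (fun s _ => ?_)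
  rw [Finset.prod_const, Finset.card_compl, Fintype.card_fin, mul_comm]
  congr 1
  rw [Matrix.submatrix_map]
  exact (RingHom.map_det C _).symm

lemma det_X_add_M {n : ℕ} (M : Matrix (Fin n) (Fin n) ℝ) (hM : M.IsHermitian) :
    (Matrix.diagonal (fun _ : Fin n => (X : ℝ[X])) + M.map C).det =
      ∏ i, ((X : ℝ[X]) + C (hM.eigenvalues i)) := by
  set V : Matrix (Fin n) (Fin n) ℝ := (hM.eigenvectorUnitary : Matrix (Fin n) (Fin n) ℝ) with hV
  have hVs : V * star V = 1 := (Matrix.mem_unitaryGroup_iff).mp hM.eigenvectorUnitary.2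
  have hM' : M = V * Matrix.diagonal hM.eigenvalues * star V := by
    have := hM.spectral_theorem
    simpa using this
  have key : Matrix.diagonal (fun _ : Fin n => (X : ℝ[X])) + M.map C =
      (V.map C) * (Matrix.diagonal (fun i => (X : ℝ[X]) + C (hM.eigenvalues i))) * ((star V).map C) := by
    have hd : Matrix.diagonal (fun i => (X : ℝ[X]) + C (hM.eigenvalues i)) =
        (X : ℝ[X]) • (1 : Matrix (Fin n) (Fin n) ℝ[X])
          + (Matrix.diagonal hM.eigenvalues).map C := by
      rw [Matrix.diagonal_map (by simp), Matrix.smul_one_eq_diagonal, ← Matrix.diagonal_add]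
    rw [hd]
    rw [Matrix.mul_add, Matrix.add_mul]
    congr 1
    · rw [Matrix.mul_smul, Matrix.smul_mul, Matrix.mul_one, ← Matrix.map_mul, hVs,
        Matrix.map_one _ (map_zero C) (map_one C), Matrix.smul_one_eq_diagonal]
    · rw [← Matrix.map_mul, ← Matrix.map_mul, ← hM']
  rw [key, Matrix.det_mul, Matrix.det_mul, mul_comm, ← mul_assoc, ← Matrix.det_mul,
    ← Matrix.map_mul]
  have : star V * V = 1 := (Matrix.mem_unitaryGroup_iff').mp hM.eigenvectorUnitary.2
  rw [this]
  simp [Matrix.det_diagonal]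

lemma cMinor_eq_esymm {n : ℕ} (M : Matrix (Fin n) (Fin n) ℝ) (hM : M.IsHermitian)
    {k : ℕ} (hk : k ≤ n) :
    cMinor k M = ∑ t ∈ Finset.powersetCard k (Finset.univ : Finset (Fin n)),
      ∏ i ∈ t, hM.eigenvalues i := by
  have h := congrArg (fun p : ℝ[X] => p.coeff (n - k))
    ((charpoly_expand M).symm.trans (det_X_add_M M hM))
  simp only [Polynomial.finset_sum_coeff] at h
  have hcard : (Finset.univ : Finset (Fin n)).card = n := by simp
  rw [Finset.prod_X_add_C_coeff (Finset.univ : Finset (Fin n)) hM.eigenvalues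
    (by rw [hcard]; exact Nat.sub_le n k)] at h
  rw [hcard, Nat.sub_sub_self hk] at h
  rw [← h, cMinor]
  have hterm : ∀ s ∈ Finset.powerset (Finset.univ : Finset (Fin n)),
      (C ((M.submatrix (Subtype.val : {x // x ∈ s} → Fin n) Subtype.val).det)
        * X ^ (n - s.card)).coeff (n - k) =
      if s.card = k then
        (M.submatrix (Subtype.val : {x // x ∈ s} → Fin n) Subtype.val).det else 0 := by
    intro s hs
    rw [Polynomial.coeff_C_mul, Polynomial.coeff_X_pow]
    have hsn : s.card ≤ n := by
      simpa using Finset.card_le_card (Finset.mem_powerset.mp hs)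
    by_cases hc : s.card = k
    · rw [if_pos hc, if_pos (by rw [hc]), mul_one]
    · rw [if_neg hc, if_neg ?_, mul_zero]
      intro heq
      exact hc (by omega)
  rw [Finset.sum_congr rfl hterm, ← Finset.sum_filter, ← Finset.powersetCard_eq_filter]

lemma esymm_succ_le {n k : ℕ} (l : Fin n → ℝ) (hl : ∀ i, 0 ≤ l i) (hn : 0 < n) :
    ∑ s ∈ Finset.powersetCard (k+1) (Finset.univ : Finset (Fin n)), ∏ i ∈ s, l i ≤
      (∑ t ∈ Finset.powersetCard k (Finset.univ : Finset (Fin n)), ∏ i ∈ t, l i) *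
        (∑ i ∈ Finset.univ.filter (fun i : Fin n => k ≤ (i : ℕ)), l i) := by
  classical
  set A := Finset.powersetCard (k+1) (Finset.univ : Finset (Fin n)) with hA
  set F : Finset (Fin n) → Finset (Fin n) × Fin n := fun s =>
    if h : s.Nonempty then (s.erase (s.max' h), s.max' h) else (∅, ⟨0, hn⟩) with hF
  have hne : ∀ s ∈ A, s.Nonempty := by
    intro s hs
    refine Finset.card_pos.mp ?_
    rw [(Finset.mem_powersetCard.mp hs).2]
    omega
  have hterm : ∀ s ∈ A, ∏ i ∈ s, l i = (∏ i ∈ (F s).1, l i) * l (F s).2 := by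
    intro s hs
    have h := hne s hs
    simp only [hF, dif_pos h]
    rw [Finset.prod_erase_mul s l (Finset.max'_mem s h)]
  rw [Finset.sum_congr rfl hterm]
  have hinj : ∀ x ∈ A, ∀ y ∈ A, F x = F y → x = y := by
    intro x hx y hy hxy
    have hxne := hne x hx; have hyne := hne y hy
    simp only [hF, dif_pos hxne, dif_pos hyne, Prod.mk.injEq] at hxy
    have h1 : x = insert (x.max' hxne) (x.erase (x.max' hxne)) :=
      (Finset.insert_erase (Finset.max'_mem _ _)).symm
    rw [h1, hxy.1, hxy.2, Finset.insert_erase (Finset.max'_mem _ _)]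
  rw [← Finset.sum_image (s := A) (g := F)
    (f := fun p : Finset (Fin n) × Fin n => (∏ i ∈ p.1, l i) * l p.2) hinj]
  have hsub : A.image F ⊆
      (Finset.powersetCard k (Finset.univ : Finset (Fin n))) ×ˢ
        (Finset.univ.filter (fun i : Fin n => k ≤ (i : ℕ))) := by
    intro p hp
    obtain ⟨s, hs, rfl⟩ := Finset.mem_image.mp hp
    have h := hne s hs
    have hcard := (Finset.mem_powersetCard.mp hs).2
    simp only [hF, dif_pos h]
    rw [Finset.mem_product]
    constructor
    · refine Finset.mem_powersetCard.mpr ⟨Finset.subset_univ _, ?_⟩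
      rw [Finset.card_erase_of_mem (Finset.max'_mem _ _), hcard]
      omega
    · simp only [Finset.mem_filter, Finset.mem_univ, true_and]
      have hsubIic : s ⊆ Finset.Iic (s.max' h) := fun x hx =>
        Finset.mem_Iic.mpr (Finset.le_max' s x hx)
      have := Finset.card_le_card hsubIic
      rw [hcard, Fin.card_Iic] at this
      omega
  refine le_trans (Finset.sum_le_sum_of_subset_of_nonneg hsub ?_) ?_
  · intro p _ _
    exact mul_nonneg (Finset.prod_nonneg (fun i _ => hl i)) (hl _)
  · rw [Finset.sum_product, Finset.sum_mul_sum]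

lemma esymm_perm {n j : ℕ} (f : Fin n → ℝ) (σ : Equiv.Perm (Fin n)) :
    ∑ t ∈ Finset.powersetCard j (Finset.univ : Finset (Fin n)), ∏ i ∈ t, f (σ i) =
      ∑ t ∈ Finset.powersetCard j (Finset.univ : Finset (Fin n)), ∏ i ∈ t, f i := by
  classical
  refine Finset.sum_nbij' (fun t => t.map σ.toEmbedding) (fun t => t.map σ.symm.toEmbedding)
    ?_ ?_ ?_ ?_ ?_
  · intro t ht
    refine Finset.mem_powersetCard.mpr ⟨Finset.subset_univ _, ?_⟩
    rw [Finset.card_map, (Finset.mem_powersetCard.mp ht).2]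
  · intro t ht
    refine Finset.mem_powersetCard.mpr ⟨Finset.subset_univ _, ?_⟩
    rw [Finset.card_map, (Finset.mem_powersetCard.mp ht).2]
  · intro t _
    ext x
    simp
  · intro t _
    ext x
    simp
  · intro t _
    rw [Finset.prod_map]
    rfl

/-- The expected volume-sampling CUR error `(k+1)·c_{k+1}(M)/c_k(M)` is bounded by `(k+1)`
times the optimal rank-`k` nuclear norm error `Σ_{i>k} λᵢ`, where `λ₁ ≥ ⋯ ≥ λₙ ≥ 0` are
the eigenvalues of the positive semidefinite matrix `M`. -/
theorem expected_cur_error_le_optimal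
    (n k : ℕ) (M : Matrix (Fin n) (Fin n) ℝ) (hM : M.PosSemidef)
    (l : Fin n → ℝ) (hmono : Antitone l)
    (σ : Equiv.Perm (Fin n)) (hl : l = hM.isHermitian.eigenvalues ∘ σ)
    (hc : 0 < cMinor k M) :
    (k + 1 : ℝ) * cMinor (k + 1) M / cMinor k M ≤
      (k + 1 : ℝ) * ∑ i ∈ Finset.univ.filter (fun i : Fin n => k ≤ (i : ℕ)), l i := by
  have hl0 : ∀ i, 0 ≤ l i := by
    intro i
    rw [hl]
    exact hM.eigenvalues_nonneg _
  have hesymm : ∀ j : ℕ, j ≤ n → cMinor j M =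
      ∑ t ∈ Finset.powersetCard j (Finset.univ : Finset (Fin n)), ∏ i ∈ t, l i := by
    intro j hj
    rw [cMinor_eq_esymm M hM.isHermitian hj,
      ← esymm_perm hM.isHermitian.eigenvalues σ]
    exact Finset.sum_congr rfl (fun t _ => Finset.prod_congr rfl (fun i _ => by rw [hl]; rfl))
  rcases lt_or_ge k n with hkn | hkn
  · have e0 := hesymm k (le_of_lt hkn)
    have e1 := hesymm (k + 1) hkn
    have hineq := esymm_succ_le (k := k) l hl0 (by omega)
    rw [div_le_iff₀ hc]
    rw [e0, e1] at *
    have hk1 : (0:ℝ) ≤ (k + 1 : ℝ) := by positivity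
    calc (k + 1 : ℝ) * ∑ s ∈ Finset.powersetCard (k+1) Finset.univ, ∏ i ∈ s, l i
        ≤ (k + 1 : ℝ) * ((∑ t ∈ Finset.powersetCard k Finset.univ, ∏ i ∈ t, l i) *
            (∑ i ∈ Finset.univ.filter (fun i : Fin n => k ≤ (i : ℕ)), l i)) :=
          mul_le_mul_of_nonneg_left hineq hk1
      _ = (k + 1 : ℝ) * (∑ i ∈ Finset.univ.filter (fun i : Fin n => k ≤ (i : ℕ)), l i) *
            (∑ t ∈ Finset.powersetCard k Finset.univ, ∏ i ∈ t, l i) := by ring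
  · have hkeq : k = n := by
      by_contra h
      have hlt : n < k := lt_of_le_of_ne hkn (fun hh => h hh.symm)
      have : cMinor k M = 0 := by
        rw [cMinor, Finset.powersetCard_eq_empty.mpr (by simpa using hlt), Finset.sum_empty]
      rw [this] at hc
      exact lt_irrefl _ hc
    have hz : cMinor (k + 1) M = 0 := by
      rw [cMinor, Finset.powersetCard_eq_empty.mpr (by simp; omega), Finset.sum_empty]
    have hfz : (Finset.univ.filter (fun i : Fin n => k ≤ (i : ℕ))) = ∅ := by
      refine Finset.filter_false_of_mem ?_
      intro i _
      have := i.2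
      omega
    rw [hz, hfz]
    simp
end
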